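/- arXiv:nlin/0406062 — 2 statements merged into one kernel-verified Lean document; each statement's English description precedes it below -/
import Mathlib

section
/- Let T be a bounded operator on a Hilbert space with operator norm ‖T‖ < 1, and let n* = min{n ∈ ℕ₊ : ‖Tⁿ‖ < e⁻¹} (which exists). Then for any λ ∈ ℂ with |λ| = 1 the resolvent satisfies ‖(λ - T)⁻¹‖ (1 - e⁻¹) ≤ n*. -/
/-!
If `R (λ - T) = 1` with `|λ| = 1`, put `x = λ⁻¹ T`, so `(λ R) (1 - x) = 1`. Multiplying the
finite geometric series identity `(1 - x) ∑_{k<n} xᵏ = 1 - xⁿ` on the left by `λ R` gives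
`λ R = ∑_{k<n} xᵏ + λ R xⁿ`. Since `‖xᵏ‖ = ‖Tᵏ‖ ≤ 1`, this yields `‖R‖ ≤ n + ‖R‖ ‖Tⁿ‖`, and
`‖Tⁿ‖ < e⁻¹` at the dissipation time `n`.
-/

open Finset

theorem eq_geom_sum_add_mul_pow_of_mul_one_sub_eq_one {A : Type*} [Ring A] {r x : A}
    (h : r * (1 - x) = 1) (n : ℕ) : r = ∑ k ∈ range n, x ^ k + r * x ^ n := by
  calc r = r * ((1 - x) * ∑ k ∈ range n, x ^ k + x ^ n) := by
        rw [mul_neg_geom_sum, sub_add_cancel, mul_one]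
    _ = ∑ k ∈ range n, x ^ k + r * x ^ n := by
        rw [mul_add, ← mul_assoc, h, one_mul]

theorem norm_pow_le_one_of_norm_le_one {A : Type*} [SeminormedRing A] {x : A}
    (h1 : ‖(1 : A)‖ ≤ 1) (hx : ‖x‖ ≤ 1) : ∀ k : ℕ, ‖x ^ k‖ ≤ 1
  | 0 => by rwa [pow_zero]
  | k + 1 => (norm_pow_le' x k.succ_pos).trans (pow_le_one₀ (norm_nonneg x) hx)

theorem norm_mul_one_sub_norm_pow_le_of_mul_one_sub_eq_one {A : Type*} [SeminormedRing A]
    {r x : A} (h : r * (1 - x) = 1) (h1 : ‖(1 : A)‖ ≤ 1) (hx : ‖x‖ ≤ 1) (n : ℕ) :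
    ‖r‖ * (1 - ‖x ^ n‖) ≤ n := by
  have hsum : ‖∑ k ∈ range n, x ^ k‖ ≤ n := by
    simpa using norm_sum_le_of_le (range n) fun k _ => norm_pow_le_one_of_norm_le_one h1 hx k
  have hr : ‖r‖ ≤ n + ‖r‖ * ‖x ^ n‖ := by
    calc ‖r‖ = ‖∑ k ∈ range n, x ^ k + r * x ^ n‖ := by
          rw [← eq_geom_sum_add_mul_pow_of_mul_one_sub_eq_one h n]
      _ ≤ ‖∑ k ∈ range n, x ^ k‖ + ‖r * x ^ n‖ := norm_add_le _ _
      _ ≤ n + ‖r‖ * ‖x ^ n‖ := add_le_add hsum (norm_mul_le _ _)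
  linarith

theorem resolvent_lower_bound_dissipation_time_general
    {H : Type*} [NormedAddCommGroup H] [InnerProductSpace ℂ H]
    (T : H →L[ℂ] H) (hT : ‖T‖ < 1)
    (n : ℕ) (hdiss : ‖T ^ n‖ < Real.exp (-1))
    (lam : ℂ) (hlam : ‖lam‖ = 1)
    (R : H →L[ℂ] H)
    (hR2 : R * (lam • (1 : H →L[ℂ] H) - T) = 1) :
    ‖R‖ * (1 - Real.exp (-1)) ≤ n := by
  have hlam0 : lam ≠ 0 := by rintro rfl; simp at hlam
  have hlaminv : ‖lam⁻¹‖ = 1 := by rw [norm_inv, hlam, inv_one]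
  have hnorm_pow : ∀ k : ℕ, ‖(lam⁻¹ • T) ^ k‖ = ‖T ^ k‖ := fun k => by
    rw [smul_pow, norm_smul, norm_pow, hlaminv, one_pow, one_mul]
  have hres : (lam • R) * (1 - lam⁻¹ • T) = 1 := by
    rw [smul_mul_assoc, ← mul_smul_comm, smul_sub, smul_smul, mul_inv_cancel₀ hlam0, one_smul, hR2]
  have hbound := norm_mul_one_sub_norm_pow_le_of_mul_one_sub_eq_one hres
    ContinuousLinearMap.norm_id_le (by rw [norm_smul, hlaminv, one_mul]; exact hT.le) n
  rw [norm_smul, hlam, one_mul, hnorm_pow] at hbound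
  nlinarith [norm_nonneg R]

/-- Lower bound for the dissipation time via the resolvent: if `T` is a bounded
operator on a complex Hilbert space with `‖T‖ < 1`, `n` is the dissipation time
(the least positive integer with `‖Tⁿ‖ < e⁻¹`), `λ` is on the unit circle and
`R` is the resolvent `(λ - T)⁻¹`, then `‖R‖ (1 - e⁻¹) ≤ n`. -/
theorem resolvent_lower_bound_dissipation_time
    {H : Type*} [NormedAddCommGroup H] [InnerProductSpace ℂ H] [CompleteSpace H]
    (T : H →L[ℂ] H) (hT : ‖T‖ < 1)
    (n : ℕ) (hn : 0 < n) (hdiss : ‖T ^ n‖ < Real.exp (-1))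
    (hmin : ∀ m : ℕ, 0 < m → m < n → Real.exp (-1) ≤ ‖T ^ m‖)
    (lam : ℂ) (hlam : ‖lam‖ = 1)
    (R : H →L[ℂ] H)
    (hR1 : (lam • (1 : H →L[ℂ] H) - T) * R = 1)
    (hR2 : R * (lam • (1 : H →L[ℂ] H) - T) = 1) :
    ‖R‖ * (1 - Real.exp (-1)) ≤ n :=
  resolvent_lower_bound_dissipation_time_general T hT n hdiss lam hlam R hR2
end

section
/- For A ∈ SL(d, ℤ), the following are equivalent: (a) A has an eigenvalue which is a root of unity different from 1; (b) there exists a nonzero k ∈ ℤ^d and a positive integer n such that k + Ak + ... + A^{n-1}k = 0. -/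
open Polynomial Matrix

/-!
The sum `k + Ak + ⋯ + A^{n-1}k` is `q(A) k` for `q = 1 + X + ⋯ + X^{n-1}`, so (b) says that
`q(A)` is singular for some `n > 0`. Over `ℂ`, the spectral mapping theorem makes `q(A)` singular
exactly when `q` vanishes at an eigenvalue of `A`, and the roots of `q` are the `n`-th roots of
unity other than `1`.
-/

theorem geom_sum_eq_zero_iff_ne_one_and_pow_eq_one {K : Type*} [Field K] [CharZero K]
    {n : ℕ} (hn : n ≠ 0) (z : K) :
    ∑ i ∈ Finset.range n, z ^ i = 0 ↔ z ≠ 1 ∧ z ^ n = 1 := by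
  rcases eq_or_ne z 1 with rfl | hz
  · simpa using hn
  · rw [geom_sum_eq hz, div_eq_zero_iff, sub_eq_zero, sub_eq_zero]
    simp [hz]

theorem spectrum.isUnit_aeval_iff {K A : Type*} [Field K] [IsAlgClosed K] [Ring A] [Algebra K A]
    [FiniteDimensional K A] (a : A) (p : K[X]) :
    IsUnit (aeval a p) ↔ ∀ z ∈ spectrum K a, ¬ p.IsRoot z := by
  nontriviality A
  rw [← spectrum.zero_notMem_iff K, spectrum.map_polynomial_aeval_of_nonempty a p
    (spectrum.nonempty_of_isAlgClosed_of_finiteDimensional K a)]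
  simp [IsRoot]

theorem Matrix.det_aeval_eq_zero_iff {n K : Type*} [Fintype n] [DecidableEq n] [Field K]
    [IsAlgClosed K] (B : Matrix n n K) (p : K[X]) :
    (aeval B p).det = 0 ↔ ∃ z, B.charpoly.IsRoot z ∧ p.IsRoot z := by
  rw [← not_iff_not, ← ne_eq, ← isUnit_iff_ne_zero, ← isUnit_iff_isUnit_det,
    spectrum.isUnit_aeval_iff]
  simp [mem_spectrum_iff_isRoot_charpoly]

theorem Matrix.det_aeval_eq_zero_iff_of_injective {n R K : Type*} [Fintype n] [DecidableEq n]
    [CommRing R] [Field K] [IsAlgClosed K] [Algebra R K]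
    (hinj : Function.Injective (algebraMap R K)) (A : Matrix n n R) (p : R[X]) :
    (aeval A p).det = 0 ↔
      ∃ z, (A.charpoly.map (algebraMap R K)).IsRoot z ∧ (p.map (algebraMap R K)).IsRoot z := by
  have hmap : aeval (A.map (algebraMap R K)) (p.map (algebraMap R K)) =
      (aeval A p).map (algebraMap R K) := by
    rw [aeval_map_algebraMap]
    exact aeval_algHom_apply (AlgHom.mapMatrix (Algebra.ofId R K)) A p
  rw [← charpoly_map, ← det_aeval_eq_zero_iff, hmap, ← map_eq_zero_iff _ hinj,
    RingHom.map_det]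
  rfl

theorem Matrix.exists_ne_zero_sum_pow_mulVec_eq_zero_iff {n R K : Type*} [Fintype n]
    [DecidableEq n] [CommRing R] [IsDomain R] [Field K] [IsAlgClosed K] [CharZero K] [Algebra R K]
    (hinj : Function.Injective (algebraMap R K)) (A : Matrix n n R) {m : ℕ} (hm : m ≠ 0) :
    (∃ k ≠ 0, ∑ i ∈ Finset.range m, (A ^ i) *ᵥ k = 0) ↔
      ∃ z, (A.charpoly.map (algebraMap R K)).IsRoot z ∧ z ≠ 1 ∧ z ^ m = 1 := by
  have hsingular := det_aeval_eq_zero_iff_of_injective hinj A (∑ i ∈ Finset.range m, X ^ i)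
  simp only [map_sum, map_pow, aeval_X, Polynomial.map_sum, Polynomial.map_pow, Polynomial.map_X,
    IsRoot.def, eval_finsetSum, eval_pow, eval_X, geom_sum_eq_zero_iff_ne_one_and_pow_eq_one hm]
    at hsingular
  simp_rw [← sum_mulVec, exists_mulVec_eq_zero_iff, hsingular, IsRoot.def]

theorem root_of_unity_ne_one_iff_telescoping_sum_general
    (d : ℕ) (A : Matrix (Fin d) (Fin d) ℤ) :
    (∃ z ∈ (A.charpoly.map (algebraMap ℤ ℂ)).roots,
        z ≠ 1 ∧ ∃ n : ℕ, 0 < n ∧ z ^ n = 1) ↔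
      (∃ k : Fin d → ℤ, k ≠ 0 ∧ ∃ n : ℕ, 0 < n ∧
        (∑ i ∈ Finset.range n, (A ^ i).mulVec k) = 0) := by
  have hne : A.charpoly.map (algebraMap ℤ ℂ) ≠ 0 := (A.charpoly_monic.map _).ne_zero
  have key (n : ℕ) (hn : 0 < n) :=
    exists_ne_zero_sum_pow_mulVec_eq_zero_iff (K := ℂ) (RingHom.injective_int _) A hn.ne'
  simp_rw [mem_roots hne]
  constructor
  · rintro ⟨z, hz, hz1, n, hn, hzn⟩
    obtain ⟨k, hk, hsum⟩ := (key n hn).mpr ⟨z, hz, hz1, hzn⟩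
    exact ⟨k, hk, n, hn, hsum⟩
  · rintro ⟨k, hk, n, hn, hsum⟩
    obtain ⟨z, hz, hz1, hzn⟩ := (key n hn).mp ⟨k, hk, hsum⟩
    exact ⟨z, hz, hz1, n, hn, hzn⟩

/-- For `A ∈ SL(d,ℤ)` the following are equivalent: (a) `A` has an eigenvalue which
is a root of unity different from `1`; (b) there is a nonzero integer vector `k`
and a positive integer `n` with `k + Ak + ⋯ + A^{n-1}k = 0`. -/
theorem root_of_unity_ne_one_iff_telescoping_sum
    (d : ℕ) (A : Matrix (Fin d) (Fin d) ℤ) (hdet : A.det = 1 ∨ A.det = -1) :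
    (∃ z ∈ (A.charpoly.map (algebraMap ℤ ℂ)).roots,
        z ≠ 1 ∧ ∃ n : ℕ, 0 < n ∧ z ^ n = 1) ↔
      (∃ k : Fin d → ℤ, k ≠ 0 ∧ ∃ n : ℕ, 0 < n ∧
        (∑ i ∈ Finset.range n, (A ^ i).mulVec k) = 0) :=
  root_of_unity_ne_one_iff_telescoping_sum_general d A
end
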